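/- Let U ⊆ ℂ be a nonempty open connected set, let W : U → ℂ^{N×N} be analytic, and let w : U → ℂ^{N×N} be (complex) differentiable with w′(z) = W(z)·w(z) for all z ∈ U. If M ∈ ℂ^{N×N} satisfies M·W(z) = W(z)·M for all z ∈ U and M·w(z₀) = w(z₀)·M for some z₀ ∈ U, then M·w(z) = w(z)·M for all z ∈ U. -/

import Mathlib

/-!
The commutator `g z = M * w z - w z * M` solves the same linear equation `g' = W g` as `w`,
because `M` commutes with `W`, and `g z₀ = 0`. Along a segment from a zero of `g`, Grönwall's
inequality forces such a solution to vanish, so the zero set of `g` is open; it is relatively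
closed by continuity, hence all of the connected domain.
-/

open Set Filter Topology

section LinearODE

variable {E : Type*} [NormedAddCommGroup E] [NormedSpace ℂ E]
  {U : Set ℂ} {A : ℂ → E →L[ℂ] E} {g : ℂ → E}

theorem eq_zero_of_segment_subset_of_hasDerivAt_apply {a b : ℂ} (hab : segment ℝ a b ⊆ U)
    (hA : ContinuousOn A U) (hg : ∀ z ∈ U, HasDerivAt g (A z (g z)) z) (ha : g a = 0) :
    g b = 0 := by
  set γ : ℝ → ℂ := ⇑(AffineMap.lineMap a b : ℝ →ᵃ[ℝ] ℂ)
  have hγU : ∀ t ∈ Icc (0 : ℝ) 1, γ t ∈ U := fun t ht =>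
    hab (segment_eq_image_lineMap ℝ a b ▸ mem_image_of_mem _ ht)
  have hderiv : ∀ t ∈ Icc (0 : ℝ) 1,
      HasDerivAt (g ∘ γ) ((b - a) • A (γ t) (g (γ t))) t := fun t ht =>
    (hg _ (hγU t ht)).scomp t AffineMap.hasDerivAt_lineMap
  obtain ⟨C, hC⟩ := isCompact_Icc.exists_bound_of_continuousOn
    (hA.comp AffineMap.lineMap_continuous.continuousOn hγU)
  have hbound : ∀ t ∈ Ico (0 : ℝ) 1,
      ‖(b - a) • A (γ t) (g (γ t))‖ ≤ ‖b - a‖ * C * ‖(g ∘ γ) t‖ := fun t ht =>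
    calc ‖(b - a) • A (γ t) (g (γ t))‖
        ≤ ‖b - a‖ * (‖A (γ t)‖ * ‖g (γ t)‖) := by
          rw [norm_smul]; gcongr; exact (A (γ t)).le_opNorm _
      _ ≤ ‖b - a‖ * (C * ‖g (γ t)‖) := by
          gcongr; exact hC t (Ico_subset_Icc_self ht)
      _ = ‖b - a‖ * C * ‖(g ∘ γ) t‖ := by rw [Function.comp_apply, mul_assoc]
  have := eq_zero_of_abs_deriv_le_mul_abs_self_of_eq_zero_right
    (fun t ht => (hderiv t ht).continuousAt.continuousWithinAt)
    (fun t ht => (hderiv t (Ico_subset_Icc_self ht)).hasDerivWithinAt)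
    (by simpa [γ] using ha) hbound 1 (right_mem_Icc.2 zero_le_one)
  simpa [γ] using this

theorem eventually_eq_zero_of_hasDerivAt_apply (hU : IsOpen U) (hA : ContinuousOn A U)
    (hg : ∀ z ∈ U, HasDerivAt g (A z (g z)) z) {z₀ : ℂ} (hz₀ : z₀ ∈ U) (h₀ : g z₀ = 0) :
    ∀ᶠ z in 𝓝 z₀, g z = 0 := by
  obtain ⟨r, hr, hball⟩ := Metric.isOpen_iff.1 hU z₀ hz₀
  filter_upwards [Metric.ball_mem_nhds z₀ hr] with z hz
  exact eq_zero_of_segment_subset_of_hasDerivAt_apply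
    (((convex_ball z₀ r).segment_subset (Metric.mem_ball_self hr) hz).trans hball) hA hg h₀

theorem eqOn_zero_of_hasDerivAt_apply (hU : IsOpen U) (hU' : IsPreconnected U)
    (hA : ContinuousOn A U) (hg : ∀ z ∈ U, HasDerivAt g (A z (g z)) z) {z₀ : ℂ} (hz₀ : z₀ ∈ U)
    (h₀ : g z₀ = 0) : EqOn g 0 U := by
  set V := {z | ∀ᶠ y in 𝓝 z, g y = 0}
  have hUV : U ⊆ V := by
    refine hU'.subset_of_closure_inter_subset isOpen_setOfPred_eventually_nhds
      ⟨z₀, hz₀, eventually_eq_zero_of_hasDerivAt_apply hU hA hg hz₀ h₀⟩ ?_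
    rintro z ⟨hzV, hzU⟩
    have hgz : g z = 0 := tendsto_nhds_unique_of_frequently_eq (hg z hzU).continuousAt
      tendsto_const_nhds ((mem_closure_iff_frequently.1 hzV).mono fun y hy => hy.self_of_nhds)
    exact eventually_eq_zero_of_hasDerivAt_apply hU hA hg hzU hgz
  exact fun z hz => (hUV hz).self_of_nhds

end LinearODE

theorem hasDerivAt_commutator_of_commute {𝕜 𝔸 : Type*} [NontriviallyNormedField 𝕜]
    [NormedRing 𝔸] [NormedAlgebra 𝕜 𝔸] {w : 𝕜 → 𝔸} {a m : 𝔸} {z : 𝕜}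
    (hw : HasDerivAt w (a * w z) z) (hm : Commute m a) :
    HasDerivAt (fun s => m * w s - w s * m) (a * (m * w z - w z * m)) z := by
  refine ((hw.const_mul m).sub (hw.mul_const m)).congr_deriv ?_
  rw [mul_sub, ← mul_assoc, hm.eq, mul_assoc, mul_assoc]

-- Any algebra norm on matrices will do: the statement only involves their topology.
attribute [local instance] Matrix.linftyOpNormedAddCommGroup Matrix.linftyOpNormedSpace
  Matrix.linftyOpNormedRing Matrix.linftyOpNormedAlgebra

theorem statement18_general {N : ℕ} (U : Set ℂ)
    (hUopen : IsOpen U) (hUconn : IsConnected U)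
    (W w : ℂ → Matrix (Fin N) (Fin N) ℂ)
    (hW : ∀ i j, AnalyticOn ℂ (fun z => W z i j) U)
    (hw : ∀ z ∈ U, ∀ i j, HasDerivAt (fun s => w s i j) ((W z * w z) i j) z)
    (M : Matrix (Fin N) (Fin N) ℂ)
    (hMW : ∀ z ∈ U, M * W z = W z * M)
    (z₀ : ℂ) (hz₀ : z₀ ∈ U) (hM0 : M * w z₀ = w z₀ * M) :
    ∀ z ∈ U, M * w z = w z * M := by
  have hWcont : ContinuousOn W U :=
    continuousOn_pi.2 fun i => continuousOn_pi.2 fun j => (hW i j).continuousOn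
  have hcomm : ∀ z ∈ U, HasDerivAt (fun s => M * w s - w s * M)
      (ContinuousLinearMap.mul ℂ _ (W z) (M * w z - w z * M)) z := fun z hz =>
    hasDerivAt_commutator_of_commute
      (hasDerivAt_pi.2 fun i => hasDerivAt_pi.2 fun j => hw z hz i j) (hMW z hz)
  have hzero := eqOn_zero_of_hasDerivAt_apply hUopen hUconn.isPreconnected
    ((ContinuousLinearMap.mul ℂ _).continuous.comp_continuousOn hWcont) hcomm hz₀
    (sub_eq_zero.2 hM0)
  exact fun z hz => sub_eq_zero.1 (hzero hz)

/-- a constant matrix commuting with the coefficient of a matrix Pearson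
equation on a connected open set, and with the solution at one point, commutes with the
solution everywhere. -/
theorem statement18 {N : ℕ} (hN : 1 ≤ N) (U : Set ℂ)
    (hUopen : IsOpen U) (hUconn : IsConnected U)
    (W w : ℂ → Matrix (Fin N) (Fin N) ℂ)
    (hW : ∀ i j, AnalyticOn ℂ (fun z => W z i j) U)
    (hw : ∀ z ∈ U, ∀ i j, HasDerivAt (fun s => w s i j) ((W z * w z) i j) z)
    (M : Matrix (Fin N) (Fin N) ℂ)
    (hMW : ∀ z ∈ U, M * W z = W z * M)
    (z₀ : ℂ) (hz₀ : z₀ ∈ U) (hM0 : M * w z₀ = w z₀ * M) :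
    ∀ z ∈ U, M * w z = w z * M :=
  statement18_general U hUopen hUconn W w hW hw M hMW z₀ hz₀ hM0
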